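/- (Globally Q-polar sets are negligible.) Let Ω ⊆ ℍⁿ be open and v ∈ PSH(Ω), and assume there exists a continuous function w ∈ PSH(Ω) with w ≥ v on Ω (this hypothesis implements the paper's assumption that Ω is strongly pseudoconvex with smooth boundary, where such a smooth PSH majorant exists). Then the set P = {q ∈ Ω : v(q) = -∞} is negligible: with u_α = (1-α)v + αw for α ∈ (0,1) and u = sup_{α∈(0,1)} u_α, one has u* = w on Ω and P = {q ∈ Ω : u(q) < u*(q)}. -/

import Mathlib

open scoped Quaternion
open MeasureTheory Metric Set Filter Topology

noncomputable section

instance : MeasurableSpace ℍ[ℝ] := borel _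
instance : BorelSpace ℍ[ℝ] := ⟨rfl⟩
instance : FiniteDimensional ℝ ℍ[ℝ] :=
  LinearEquiv.finiteDimensional
    (Quaternion.linearIsometryEquivTuple).symm.toLinearEquiv

/-- `ℍⁿ`, identified with `ℝ^{4n}` and carrying its Euclidean (ℓ²) norm. -/
abbrev Hn (n : ℕ) := PiLp 2 (fun _ : Fin n => ℍ[ℝ])

instance {n : ℕ} : MeasurableSpace (Hn n) := borel _
instance {n : ℕ} : BorelSpace (Hn n) := ⟨rfl⟩

/-- The average of a real valued function over the sphere of center `x` and radius `r`,
computed using the canonical (surface) measure on the unit sphere of `ℍ`. -/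
def sphereAvg (h : ℍ[ℝ] → ℝ) (x : ℍ[ℝ]) (r : ℝ) : ℝ :=
  ⨍ z : sphere (0 : ℍ[ℝ]) 1, h (x + r • (z : ℍ[ℝ])) ∂(volume.toSphere)

/-- The sub-mean value inequality on `D`: for every closed ball contained in `D`,
`v x` is bounded by the average over the boundary sphere of every continuous real-valued
function dominating `v` on that sphere.  (For an upper semicontinuous `v` this is
equivalent to `v x ≤` the average of `v` over the sphere.) -/
def SubMeanOn (v : ℍ[ℝ] → EReal) (D : Set ℍ[ℝ]) : Prop :=
  ∀ x r, 0 < r → closedBall x r ⊆ D →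
    ∀ h : ℍ[ℝ] → ℝ, Continuous h → (∀ z ∈ sphere x r, v z ≤ (h z : EReal)) →
      v x ≤ (sphereAvg h x r : EReal)

/-- `v` is subharmonic on the open set `D ⊆ ℍ`: upper semicontinuous, takes values in
`[-∞, ∞)`, is not identically `-∞` on any connected component of `D`, and satisfies the
sub-mean value inequality. -/
def SubharmonicOn (v : ℍ[ℝ] → EReal) (D : Set ℍ[ℝ]) : Prop :=
  UpperSemicontinuousOn v D ∧ (∀ x ∈ D, v x ≠ ⊤) ∧
    (∀ x ∈ D, ∃ y ∈ connectedComponentIn D x, v y ≠ ⊥) ∧ SubMeanOn v D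

/-- Componentwise right multiplication `b·q = (b₁q, …, bₙq)`. -/
def qmul {n : ℕ} (b : Hn n) (q : ℍ[ℝ]) : Hn n := WithLp.toLp 2 (fun i => b i * q)

/-- The parameter set of the quaternionic line `q ↦ a + b·q` inside `Ω`. -/
def sliceSet {n : ℕ} (Ω : Set (Hn n)) (a b : Hn n) : Set ℍ[ℝ] :=
  {q : ℍ[ℝ] | a + qmul b q ∈ Ω}

/-- The restriction of `u` to the quaternionic line `q ↦ a + b·q`. -/
def sliceFun {n : ℕ} (u : Hn n → EReal) (a b : Hn n) : ℍ[ℝ] → EReal :=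
  fun q => u (a + qmul b q)

/-- `u` is quaternionic plurisubharmonic on `Ω ⊆ ℍⁿ`: `u` is upper semicontinuous on `Ω`,
takes values in `[-∞,∞)`, is not identically `-∞` on any connected component of `Ω`, and
for all `a b : ℍⁿ` the function `q ↦ u (a + b·q)` is subharmonic or identically `-∞` on
every connected component of `{q : ℍ | a + b·q ∈ Ω}`. -/
def QPSHOn {n : ℕ} (u : Hn n → EReal) (Ω : Set (Hn n)) : Prop :=
  UpperSemicontinuousOn u Ω ∧ (∀ x ∈ Ω, u x ≠ ⊤) ∧
    (∀ x ∈ Ω, ∃ y ∈ connectedComponentIn Ω x, u y ≠ ⊥) ∧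
    ∀ a b : Hn n, ∀ q₀ ∈ sliceSet Ω a b,
      SubharmonicOn (sliceFun u a b) (connectedComponentIn (sliceSet Ω a b) q₀) ∨
        ∀ q ∈ connectedComponentIn (sliceSet Ω a b) q₀, sliceFun u a b q = ⊥

/-- Upper semicontinuous regularization within `Ω`: `u*(q) = limsup_{q'→q, q'∈Ω} u(q')`. -/
def uscReg {n : ℕ} (u : Hn n → EReal) (Ω : Set (Hn n)) : Hn n → EReal :=
  fun q => Filter.limsup u (nhdsWithin q Ω)

/-- `u` is locally bounded from above on `Ω`. -/
def LocallyBddAboveOn {n : ℕ} (u : Hn n → EReal) (Ω : Set (Hn n)) : Prop :=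
  ∀ q ∈ Ω, ∃ s ∈ 𝓝 q, ∃ M : ℝ, ∀ x ∈ s ∩ Ω, u x ≤ (M : EReal)


/-! `u` equals `w` off `P` and `-∞` on `P`, so everything reduces to `P` having empty interior:
then `u = w` arbitrarily close to every point, and continuity of `w` gives `u* = w`.

If `v = -∞` on a ball `B(p, ρ)` and `y` is near `p`, restrict `v` to the quaternionic line
`q ↦ y + (p - y)·q`. A cap of the unit sphere around `q = 1` is mapped into `B(p, ρ)`, so the
sub-mean value inequality at `q = 0` against the continuous majorants `C - M·φ`, with `φ` a bump
supported on that cap and `C` an upper bound of `v` near `y`, gives `v(y) ≤ C - M·avg φ` for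
every `M`, i.e. `v(y) = -∞`. Hence the interior of `P` is relatively closed in `Ω`, and a
component of `Ω` meeting it would lie inside `P`, which plurisubharmonicity excludes. -/

instance : NeZero (volume : Measure ℍ[ℝ]).toSphere := ⟨Measure.toSphere_ne_zero _⟩

lemma Continuous.integrable_toSphere_comp {φ : ℍ[ℝ] → ℝ} (hφ : Continuous φ) (x : ℍ[ℝ])
    (r : ℝ) :
    Integrable (fun z : sphere (0 : ℍ[ℝ]) 1 => φ (x + r • (z : ℍ[ℝ]))) volume.toSphere :=
  (hφ.comp (by fun_prop)).integrable_of_hasCompactSupport (HasCompactSupport.of_compactSpace _)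

lemma sphereAvg_const_sub_mul {φ : ℍ[ℝ] → ℝ} (hφ : Continuous φ) (C M : ℝ) (x : ℍ[ℝ]) (r : ℝ) :
    sphereAvg (fun z => C - M * φ z) x r = C - M * sphereAvg φ x r := by
  rw [sphereAvg, sphereAvg, average_eq, average_eq,
    integral_sub (integrable_const C) ((hφ.integrable_toSphere_comp x r).const_mul M),
    integral_const_mul, integral_const, smul_eq_mul, smul_eq_mul, smul_eq_mul, mul_sub,
    ← mul_assoc, inv_mul_cancel₀ measureReal_univ_ne_zero, one_mul, mul_left_comm]

lemma sphereAvg_pos {φ : ℍ[ℝ] → ℝ} (hφ : Continuous φ) (hφ0 : ∀ z, 0 ≤ φ z) {z : ℍ[ℝ]}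
    (hz : ‖z‖ = 1) (hφz : 0 < φ z) : 0 < sphereAvg φ 0 1 := by
  rw [sphereAvg, average_eq, smul_eq_mul]
  refine mul_pos (inv_pos.mpr measureReal_univ_pos) ?_
  simp only [one_smul, zero_add]
  exact (hφ.comp continuous_subtype_val).integral_pos_of_hasCompactSupport_nonneg_nonzero
    (HasCompactSupport.of_compactSpace _) (fun z => hφ0 z) (x := ⟨z, by simpa using hz⟩) hφz.ne'

theorem SubMeanOn.eq_bot_of_eq_bot_on_cap {f : ℍ[ℝ] → EReal} {D : Set ℍ[ℝ]} (hf : SubMeanOn f D)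
    (hD : closedBall 0 1 ⊆ D) {C δ : ℝ} (hδ : 0 < δ) (hC : ∀ z ∈ sphere (0 : ℍ[ℝ]) 1, f z ≤ C)
    (hcap : ∀ z ∈ sphere (0 : ℍ[ℝ]) 1, ‖z - 1‖ < δ → f z = ⊥) : f 0 = ⊥ := by
  set φ : ℍ[ℝ] → ℝ := fun z => max 0 (1 - ‖z - 1‖ / δ)
  have hφc : Continuous φ := by fun_prop
  have hφ_pos : 0 < sphereAvg φ 0 1 :=
    sphereAvg_pos hφc (fun z => le_max_left _ _) norm_one (by simp [φ])
  refine (EReal.eq_bot_iff_forall_lt _).mpr fun t => ?_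
  set M := (C - (t - 1)) / sphereAvg φ 0 1
  have hdom : ∀ z ∈ sphere (0 : ℍ[ℝ]) 1, f z ≤ ((C - M * φ z : ℝ) : EReal) := by
    intro z hz
    rcases lt_or_ge ‖z - 1‖ δ with hnear | hfar
    · simp [hcap z hz hnear]
    · have : φ z = 0 := max_eq_left (by rw [sub_nonpos, one_le_div hδ]; exact hfar)
      simpa [this] using hC z hz
  calc f 0 ≤ (sphereAvg (fun z => C - M * φ z) 0 1 : EReal) :=
        hf 0 1 one_pos hD _ (by fun_prop) hdom
    _ = ((t - 1 : ℝ) : EReal) := by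
      rw [sphereAvg_const_sub_mul hφc, div_mul_cancel₀ _ hφ_pos.ne', sub_sub_cancel]
    _ < t := by exact_mod_cast sub_one_lt t

section Slices

variable {n : ℕ}

lemma norm_qmul (b : Hn n) (q : ℍ[ℝ]) : ‖qmul b q‖ = ‖b‖ * ‖q‖ := by
  simp only [PiLp.norm_eq_of_L2, qmul, norm_mul, mul_pow, ← Finset.sum_mul]
  rw [Real.sqrt_mul (Finset.sum_nonneg fun i _ => sq_nonneg _), Real.sqrt_sq (norm_nonneg q)]

lemma dist_add_qmul_sub_left (p y : Hn n) (z : ℍ[ℝ]) :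
    dist (y + qmul (p - y) z) y = dist p y * ‖z‖ := by
  rw [dist_eq_norm, add_sub_cancel_left, norm_qmul, dist_eq_norm]

lemma dist_add_qmul_sub_right (p y : Hn n) (z : ℍ[ℝ]) :
    dist (y + qmul (p - y) z) p = dist p y * ‖z - 1‖ := by
  have : y + qmul (p - y) z - p = qmul (p - y) (z - 1) := by
    refine PiLp.ext fun i => ?_
    show y i + (p i - y i) * z - p i = (p i - y i) * (z - 1)
    noncomm_ring
  rw [dist_eq_norm, this, norm_qmul, dist_eq_norm]

end Slices

namespace QPSHOn

variable {n : ℕ} {Ω : Set (Hn n)} {v : Hn n → EReal}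

theorem eq_bot_of_eq_bot_on_ball (hv : QPSHOn v Ω) {p y : Hn n} {ρ : ℝ} (hρ : 0 < ρ)
    (hp : ∀ z ∈ ball p ρ, v z = ⊥) (hy : closedBall y (dist p y) ⊆ Ω) : v y = ⊥ := by
  have hslice : ∀ z : ℍ[ℝ], ‖z‖ ≤ 1 → y + qmul (p - y) z ∈ closedBall y (dist p y) := by
    intro z hz
    rw [mem_closedBall, dist_add_qmul_sub_left]
    exact mul_le_of_le_one_right dist_nonneg hz
  have hqmul0 : y + qmul (p - y) 0 = y := by
    rw [add_eq_left]
    exact PiLp.ext fun i => mul_zero _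
  have h0 : (0 : ℍ[ℝ]) ∈ sliceSet Ω y (p - y) := by
    simpa [sliceSet, hqmul0] using hy (mem_closedBall_self dist_nonneg)
  have hvy : sliceFun v y (p - y) 0 = v y := by rw [sliceFun, hqmul0]
  rw [← hvy]
  rcases hv.2.2.2 y (p - y) 0 h0 with hsub | hbot
  · obtain ⟨a, ha, hmax⟩ := (hv.1.mono hy).exists_isMaxOn ⟨y, mem_closedBall_self dist_nonneg⟩
      (isCompact_closedBall y _)
    -- the `+ 1` keeps `δ` positive when `p = y`
    refine hsub.2.2.2.eq_bot_of_eq_bot_on_cap (C := (v a).toReal) (δ := ρ / (dist p y + 1))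
      ?_ (by positivity) (fun z hz => ?_) (fun z _ hz => hp _ ?_)
    · refine (convex_closedBall 0 1).isPreconnected.subset_connectedComponentIn
        (mem_closedBall_self zero_le_one) fun z hz => hy (hslice z ?_)
      simpa using hz
    · exact (hmax (hslice z (by simp_all))).trans (EReal.le_coe_toReal (hv.2.1 a (hy ha)))
    · rw [mem_ball, dist_add_qmul_sub_right]
      calc dist p y * ‖z - 1‖ ≤ dist p y * (ρ / (dist p y + 1)) := by gcongr
        _ < ρ := by
          rw [mul_div_assoc', div_lt_iff₀ (by positivity)]
          nlinarith
  · exact hbot 0 (mem_connectedComponentIn h0)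

theorem mem_interior_of_mem_closure (hv : QPSHOn v Ω) (hΩ : IsOpen Ω) {x : Hn n} (hx : x ∈ Ω)
    (hcl : x ∈ closure (interior {q | v q = ⊥})) : x ∈ interior {q | v q = ⊥} := by
  have hsub : interior {q | v q = ⊥} ⊆ {q | v q = ⊥} := interior_subset
  obtain ⟨ε, hε, hεΩ⟩ := Metric.isOpen_iff.mp hΩ x hx
  obtain ⟨p, hp, hpx⟩ := Metric.mem_closure_iff.mp hcl (ε / 4) (by positivity)
  obtain ⟨ρ, hρ, hρp⟩ := Metric.isOpen_iff.mp isOpen_interior p hp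
  refine mem_interior_iff_mem_nhds.mpr <|
    mem_of_superset (ball_mem_nhds x (by positivity : 0 < ε / 4)) fun y hy =>
      hv.eq_bot_of_eq_bot_on_ball hρ (fun z hz => hsub (hρp hz)) fun z hz => hεΩ ?_
  rw [mem_ball] at hy ⊢
  rw [mem_closedBall] at hz
  linarith [dist_triangle z y x, dist_triangle p x y, dist_comm x p, dist_comm x y]

theorem frequently_ne_bot (hv : QPSHOn v Ω) (hΩ : IsOpen Ω) {q : Hn n} (hq : q ∈ Ω) :
    ∃ᶠ x in 𝓝 q, v x ≠ ⊥ := by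
  intro hbot
  have hsub : interior {x | v x = ⊥} ⊆ {x | v x = ⊥} := interior_subset
  have hq_int : q ∈ interior {x | v x = ⊥} :=
    mem_interior_iff_mem_nhds.mpr (by simpa using hbot : ∀ᶠ x in 𝓝 q, v x = ⊥)
  have hcomp : connectedComponentIn Ω q ⊆ interior {x | v x = ⊥} :=
    isPreconnected_connectedComponentIn.subset_of_closure_inter_subset isOpen_interior
      ⟨q, mem_connectedComponentIn hq, hq_int⟩ fun x ⟨hcl, hxC⟩ =>
        hv.mem_interior_of_mem_closure hΩ (connectedComponentIn_subset _ _ hxC) hcl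
  obtain ⟨y, hyC, hy⟩ := hv.2.2.1 q hq
  exact hy (hsub (hcomp hyC))

end QPSHOn

lemma iSup_convexComb_bot (r : ℝ) :
    ⨆ α : Ioo (0 : ℝ) 1, ((1 - α : ℝ) : EReal) * ⊥ + ((α : ℝ) : EReal) * r = ⊥ :=
  iSup_eq_bot.mpr fun α => by
    rw [EReal.coe_mul_bot_of_pos (sub_pos.mpr α.2.2), EReal.bot_add]

lemma iSup_convexComb_of_le {x : EReal} {r : ℝ} (hx : x ≤ r) (hbot : x ≠ ⊥) :
    ⨆ α : Ioo (0 : ℝ) 1, ((1 - α : ℝ) : EReal) * x + ((α : ℝ) : EReal) * r = r := by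
  obtain ⟨s, rfl⟩ : ∃ s : ℝ, (s : EReal) = x :=
    ⟨x.toReal, EReal.coe_toReal (ne_top_of_le_ne_top (EReal.coe_ne_top r) hx) hbot⟩
  have hsr : s ≤ r := EReal.coe_le_coe_iff.mp hx
  simp_rw [← EReal.coe_mul, ← EReal.coe_add]
  refine le_antisymm (iSup_le fun α => EReal.coe_le_coe_iff.mpr (by nlinarith [α.2.1, α.2.2])) ?_
  have hlim : Tendsto (fun a : ℝ => Real.toEReal ((1 - a) * s + a * r)) (𝓝[<] 1) (𝓝 r) :=
    ((continuous_coe_real_ereal.comp (by fun_prop)).tendsto' 1 _ (by simp)).mono_left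
      nhdsWithin_le_nhds
  refine le_of_tendsto hlim ?_
  filter_upwards [Ioo_mem_nhdsLT zero_lt_one] with a ha
  exact le_iSup_of_le (⟨a, ha⟩ : Ioo (0 : ℝ) 1) le_rfl

theorem Filter.limsup_eq_of_le_of_frequently_eq {α β : Type*} [CompleteLinearOrder β]
    [TopologicalSpace β] [OrderTopology β] {f : Filter α} {u g : α → β} {b : β}
    (hg : Tendsto g f (𝓝 b)) (hle : ∀ᶠ x in f, u x ≤ g x) (heq : ∃ᶠ x in f, u x = g x) :
    limsup u f = b := by
  have : (f ⊓ 𝓟 {x | u x = g x}).NeBot := frequently_iff_neBot.mp heq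
  have : f.NeBot := neBot_of_le (inf_le_left : f ⊓ 𝓟 {x | u x = g x} ≤ f)
  refine le_antisymm ((limsup_le_limsup hle).trans hg.limsup_eq.le) ?_
  calc b = limsup g (f ⊓ 𝓟 {x | u x = g x}) := ((hg.mono_left inf_le_left).limsup_eq).symm
    _ = limsup u (f ⊓ 𝓟 {x | u x = g x}) :=
      (limsup_congr (mem_inf_of_right (mem_principal_self _))).symm
    _ ≤ limsup u f := limsup_le_limsup_of_le inf_le_left

theorem qpolar_negligible_general {n : ℕ} (Ω : Set (Hn n)) (hΩ : IsOpen Ω)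
    (v : Hn n → EReal) (hv : QPSHOn v Ω) (w : Hn n → ℝ)
    (hwc : ContinuousOn w Ω)
    (hge : ∀ q ∈ Ω, v q ≤ ((w q : ℝ) : EReal)) :
    (∀ q ∈ Ω,
        uscReg (fun q' => ⨆ α : Set.Ioo (0 : ℝ) 1,
          (((1 - (α : ℝ)) : ℝ) : EReal) * v q' + (((α : ℝ) : ℝ) : EReal) * ((w q' : ℝ) : EReal))
          Ω q = ((w q : ℝ) : EReal)) ∧
      {q : Hn n | q ∈ Ω ∧ v q = ⊥} =
        {q : Hn n | q ∈ Ω ∧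
          (⨆ α : Set.Ioo (0 : ℝ) 1,
            (((1 - (α : ℝ)) : ℝ) : EReal) * v q + (((α : ℝ) : ℝ) : EReal) * ((w q : ℝ) : EReal)) <
          uscReg (fun q' => ⨆ α : Set.Ioo (0 : ℝ) 1,
            (((1 - (α : ℝ)) : ℝ) : EReal) * v q' + (((α : ℝ) : ℝ) : EReal) * ((w q' : ℝ) : EReal))
            Ω q} := by
  set u : Hn n → EReal := fun q' => ⨆ α : Set.Ioo (0 : ℝ) 1,
    (((1 - (α : ℝ)) : ℝ) : EReal) * v q' + (((α : ℝ) : ℝ) : EReal) * ((w q' : ℝ) : EReal)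
  have hu_bot : ∀ q, v q = ⊥ → u q = ⊥ := fun q h => by
    simp only [u, h, iSup_convexComb_bot]
  have hu_eq : ∀ q ∈ Ω, v q ≠ ⊥ → u q = w q := fun q hq h => iSup_convexComb_of_le (hge q hq) h
  have hu_le : ∀ q ∈ Ω, u q ≤ w q := fun q hq => by
    by_cases h : v q = ⊥
    · simp [hu_bot q h]
    · exact (hu_eq q hq h).le
  have hreg : ∀ q ∈ Ω, uscReg u Ω q = w q := by
    intro q hq
    refine limsup_eq_of_le_of_frequently_eq
      ((continuous_coe_real_ereal.tendsto _).comp (hwc q hq))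
      (eventually_mem_nhdsWithin.mono hu_le) ?_
    rw [hΩ.nhdsWithin_eq hq]
    exact ((hv.frequently_ne_bot hΩ hq).and_eventually (hΩ.mem_nhds hq)).mono
      fun x ⟨hx, hxΩ⟩ => hu_eq x hxΩ hx
  refine ⟨hreg, Set.ext fun q => and_congr_right fun hq => ?_⟩
  change v q = ⊥ ↔ u q < uscReg u Ω q
  rw [hreg q hq]
  by_cases h : v q = ⊥
  · exact iff_of_true h (hu_bot q h ▸ EReal.bot_lt_coe _)
  · exact iff_of_false h (hu_eq q hq h ▸ lt_irrefl _)

/-- **Globally Q-polar sets are negligible.** If `v ∈ PSH(Ω)` admits a continuous PSH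
majorant `w`, then with `u_α = (1-α)v + αw` for `α ∈ (0,1)` and `u = sup_α u_α` one has
`u* = w` on `Ω` and `{v = -∞} = {u < u*}`; in particular `P = {v = -∞}` is negligible. -/
theorem qpolar_negligible {n : ℕ} (Ω : Set (Hn n)) (hΩ : IsOpen Ω)
    (v : Hn n → EReal) (hv : QPSHOn v Ω) (w : Hn n → ℝ)
    (hw : QPSHOn (fun q => ((w q : ℝ) : EReal)) Ω) (hwc : ContinuousOn w Ω)
    (hge : ∀ q ∈ Ω, v q ≤ ((w q : ℝ) : EReal)) :
    (∀ q ∈ Ω,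
        uscReg (fun q' => ⨆ α : Set.Ioo (0 : ℝ) 1,
          (((1 - (α : ℝ)) : ℝ) : EReal) * v q' + (((α : ℝ) : ℝ) : EReal) * ((w q' : ℝ) : EReal))
          Ω q = ((w q : ℝ) : EReal)) ∧
      {q : Hn n | q ∈ Ω ∧ v q = ⊥} =
        {q : Hn n | q ∈ Ω ∧
          (⨆ α : Set.Ioo (0 : ℝ) 1,
            (((1 - (α : ℝ)) : ℝ) : EReal) * v q + (((α : ℝ) : ℝ) : EReal) * ((w q : ℝ) : EReal)) <
          uscReg (fun q' => ⨆ α : Set.Ioo (0 : ℝ) 1,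
            (((1 - (α : ℝ)) : ℝ) : EReal) * v q' + (((α : ℝ) : ℝ) : EReal) * ((w q' : ℝ) : EReal))
            Ω q} :=
  qpolar_negligible_general Ω hΩ v hv w hwc hge
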